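/- arXiv:2301.01811 — 4 statements merged into one kernel-verified Lean document; each statement's English description precedes it below -/
import Mathlib

section
/- (Representer theorem.) Let H be a reproducing kernel Hilbert space on a set E with reproducing kernel k, let a_1, ..., a_N be N points of E, let b_1, ..., b_N be real numbers, and let γ > 0. Then there exists a unique function χ ∈ H minimizing the regularized empirical risk g ↦ (1/N) Σ_{l=1}^N (g(a_l) − b_l)² + γ‖g‖²_H over g ∈ H; this minimizer has the form χ(y) = Σ_{l=1}^N β_l k(y, a_l), where the coefficient vector β ∈ ℝ^N is the (unique) solution of the linear system (γ N I_{N×N} + K|_a) β = b, with K|_a the N × N matrix with entries (K|_a)(i,j) = k(a_i, a_j) and b = (b_1, ..., b_N). -/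
open scoped RealInnerProductSpace
open Matrix

/-- (Representer theorem.)  Let `H` be a RKHS on a set `E`
with reproducing kernel `k` (elements of `H` are realized as functions on `E`
via the injective linear evaluation map `ev`, with `K x ∈ H` the representer of
`k(·, x)`), let `a₁, …, a_N ∈ E`, `b₁, …, b_N ∈ ℝ` and `γ > 0`.  Then there is
a unique minimizer `χ ∈ H` of the regularized empirical risk
`g ↦ (1/N) Σ_l (g(a_l) − b_l)² + γ‖g‖²`, and it has the form
`χ = Σ_l β_l k(·, a_l)` where `β ∈ ℝ^N` is the unique solution of the linear
system `(γ N I + K|_a) β = b`, with `(K|_a)(i,j) = k(aᵢ, aⱼ)`. -/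
theorem representer_theorem
    {E H : Type*} [NormedAddCommGroup H] [InnerProductSpace ℝ H] [CompleteSpace H]
    (ev : H →ₗ[ℝ] E → ℝ) (hev : Function.Injective ev)
    (k : E → E → ℝ) (K : E → H)
    (hK : ∀ x : E, ev (K x) = fun y => k y x)
    (hrep : ∀ (f : H) (x : E), ev f x = ⟪K x, f⟫)
    (N : ℕ) (hN : 0 < N) (a : Fin N → E) (b : Fin N → ℝ) (γ : ℝ) (hγ : 0 < γ)
    (Ka : Matrix (Fin N) (Fin N) ℝ) (hKa : ∀ i j, Ka i j = k (a i) (a j))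
    (risk : H → ℝ)
    (hrisk : ∀ g : H,
      risk g = (1 / (N : ℝ)) * ∑ l, (ev g (a l) - b l) ^ 2 + γ * ‖g‖ ^ 2) :
    ∃ β : Fin N → ℝ,
      ((γ * N) • (1 : Matrix (Fin N) (Fin N) ℝ) + Ka).mulVec β = b ∧
      (∀ β' : Fin N → ℝ,
        ((γ * N) • (1 : Matrix (Fin N) (Fin N) ℝ) + Ka).mulVec β' = b → β' = β) ∧
      (∀ g : H, risk (∑ l, β l • K (a l)) ≤ risk g) ∧
      (∀ χ' : H, (∀ g : H, risk χ' ≤ risk g) → χ' = ∑ l, β l • K (a l)) := by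
  have hKK : ∀ x y : E, ⟪K x, K y⟫ = k x y := by
    intro x y
    have h1 := hrep (K y) x
    rw [hK y] at h1
    exact h1.symm
  set M : Matrix (Fin N) (Fin N) ℝ := (γ * N) • (1 : Matrix (Fin N) (Fin N) ℝ) + Ka with hM
  have hN' : (N : ℝ) ≠ 0 := Nat.cast_ne_zero.mpr hN.ne'
  -- Gram quadratic form
  have hquad : ∀ v : Fin N → ℝ, v ⬝ᵥ Ka.mulVec v = ‖∑ l, v l • K (a l)‖ ^ 2 := by
    intro v
    rw [← real_inner_self_eq_norm_sq, sum_inner]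
    simp only [inner_sum, real_inner_smul_left, real_inner_smul_right, hKK,
      dotProduct, Matrix.mulVec, Finset.mul_sum]
    exact Finset.sum_congr rfl fun i _ => Finset.sum_congr rfl fun j _ => by
      rw [hKa]; ring
  -- kernel of M is trivial
  have hker : ∀ v : Fin N → ℝ, M.mulVec v = 0 → v = 0 := by
    intro v hv
    have h1 : v ⬝ᵥ M.mulVec v = 0 := by rw [hv]; simp
    have h2 : v ⬝ᵥ M.mulVec v
        = γ * N * (∑ i, v i ^ 2) + ‖∑ l, v l • K (a l)‖ ^ 2 := by
      rw [hM, Matrix.add_mulVec, dotProduct_add, hquad v]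
      congr 1
      rw [Matrix.smul_mulVec, Matrix.one_mulVec, dotProduct_smul]
      simp only [smul_eq_mul, dotProduct, Finset.mul_sum]
      exact Finset.sum_congr rfl fun i _ => by ring
    have hsum : (∑ i, v i ^ 2) = 0 := by
      have hnn : (0:ℝ) ≤ ∑ i, v i ^ 2 := Finset.sum_nonneg fun i _ => sq_nonneg _
      have hnorm : (0:ℝ) ≤ ‖∑ l, v l • K (a l)‖ ^ 2 := sq_nonneg _
      have hpos : (0:ℝ) < γ * N := by positivity
      nlinarith [h2.symm.trans h1]
    have := (Finset.sum_eq_zero_iff_of_nonneg (fun i _ => sq_nonneg (v i))).mp hsum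
    funext i
    exact pow_eq_zero_iff (by norm_num) |>.mp (this i (Finset.mem_univ i))
  have hinj : Function.Injective M.mulVecLin := by
    rw [← LinearMap.ker_eq_bot, LinearMap.ker_eq_bot']
    intro v hv
    exact hker v hv
  have hsurj : Function.Surjective M.mulVecLin :=
    (LinearMap.injective_iff_surjective).mp hinj
  obtain ⟨β, hβ⟩ := hsurj b
  rw [Matrix.mulVecLin_apply] at hβ
  set χ : H := ∑ l, β l • K (a l) with hχ
  -- key: inner products at the data points
  have hc : ∀ l, ⟪K (a l), χ⟫ - b l = -(γ * N) * β l := by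
    intro l
    have h1 : ⟪K (a l), χ⟫ = Ka.mulVec β l := by
      rw [hχ, inner_sum]
      simp only [real_inner_smul_right, hKK, Matrix.mulVec, dotProduct]
      exact Finset.sum_congr rfl fun j _ => by rw [hKa]; ring
    have h2 : M.mulVec β l = b l := by rw [hβ]
    rw [hM, Matrix.add_mulVec, Matrix.smul_mulVec, Matrix.one_mulVec] at h2
    simp only [Pi.add_apply, Pi.smul_apply, smul_eq_mul] at h2
    rw [h1]; linarith
  -- inner product of χ with arbitrary h
  have hip : ∀ h : H, ⟪χ, h⟫ = ∑ l, β l * ⟪K (a l), h⟫ := by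
    intro h
    rw [hχ, sum_inner]
    exact Finset.sum_congr rfl fun l _ => real_inner_smul_left _ _ _
  -- risk decomposition
  have hdecomp : ∀ h : H, risk (χ + h)
      = risk χ + (1 / (N : ℝ)) * ∑ l, ⟪K (a l), h⟫ ^ 2 + γ * ‖h‖ ^ 2 := by
    intro h
    rw [hrisk, hrisk]
    have hev' : ∀ l, ev (χ + h) (a l) = ⟪K (a l), χ⟫ + ⟪K (a l), h⟫ := by
      intro l
      rw [hrep, inner_add_right]
    have hevχ : ∀ l, ev χ (a l) = ⟪K (a l), χ⟫ := fun l => hrep χ (a l)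
    have hnorm : ‖χ + h‖ ^ 2 = ‖χ‖ ^ 2 + 2 * ⟪χ, h⟫ + ‖h‖ ^ 2 := norm_add_sq_real χ h
    have hsum : ∑ l, (ev (χ + h) (a l) - b l) ^ 2
        = ∑ l, (ev χ (a l) - b l) ^ 2
          + ∑ l, 2 * ((⟪K (a l), χ⟫ - b l) * ⟪K (a l), h⟫)
          + ∑ l, ⟪K (a l), h⟫ ^ 2 := by
      rw [← Finset.sum_add_distrib, ← Finset.sum_add_distrib]
      exact Finset.sum_congr rfl fun l _ => by rw [hev' l, hevχ l]; ring
    rw [hsum, hnorm]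
    have hcross : ∑ l, 2 * ((⟪K (a l), χ⟫ - b l) * ⟪K (a l), h⟫)
        = -(2 * (γ * N)) * ⟪χ, h⟫ := by
      rw [hip h, Finset.mul_sum]
      rw [← Finset.sum_congr rfl fun l _ => by rw [hc l]]
      exact Finset.sum_congr rfl fun l _ => by ring
    rw [hcross]
    field_simp
    ring
  refine ⟨β, hβ, ?_, ?_, ?_⟩
  · intro β' hβ'
    apply hinj
    rw [Matrix.mulVecLin_apply, Matrix.mulVecLin_apply, hβ', hβ]
  · intro g
    have := hdecomp (g - χ)
    rw [add_sub_cancel] at this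
    rw [this]
    have h1 : (0:ℝ) ≤ (1 / (N : ℝ)) * ∑ l, ⟪K (a l), g - χ⟫ ^ 2 := by
      apply mul_nonneg (by positivity)
      exact Finset.sum_nonneg fun l _ => sq_nonneg _
    nlinarith [sq_nonneg ‖g - χ‖]
  · intro χ' hmin
    have := hdecomp (χ' - χ)
    rw [add_sub_cancel] at this
    have hle := hmin χ
    have h1 : (0:ℝ) ≤ (1 / (N : ℝ)) * ∑ l, ⟪K (a l), χ' - χ⟫ ^ 2 := by
      apply mul_nonneg (by positivity)
      exact Finset.sum_nonneg fun l _ => sq_nonneg _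
    have h2 : ‖χ' - χ‖ ^ 2 ≤ 0 := by nlinarith
    have h3 : χ' - χ = 0 := by
      rw [← norm_eq_zero]
      nlinarith [sq_nonneg ‖χ' - χ‖, norm_nonneg (χ' - χ)]
    rw [sub_eq_zero] at h3
    exact h3
end

section
/- (Core of the Moore–Aronszajn construction.) Let E be a set and k : E × E → ℝ a symmetric, positive semidefinite kernel. On the real vector space H_0 of functions of the form f = Σ_{i=1}^N a_i k(·, x_i) (finite linear combinations, x_i ∈ E, a_i ∈ ℝ), the assignment ⟨Σ_i a_i k(·, x_i), Σ_j b_j k(·, y_j)⟩ := Σ_i Σ_j a_i b_j k(x_i, y_j) is well defined (its value depends only on the functions, not on the chosen representations), is symmetric and bilinear, satisfies ⟨f, f⟩ ≥ 0 for all f ∈ H_0, satisfies the reproducing property f(x) = ⟨k(·, x), f⟩ for all f ∈ H_0 and x ∈ E, and satisfies ⟨f, f⟩ = 0 only if f is the zero function; hence it is an inner product on H_0. -/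
/-! Represent elements of `H₀` by finitely supported coefficients `c : E →₀ ℝ`, on which the
Gram form `G c d = Σ c x d y k(x, y)` is manifestly bilinear. Since
`G c d = Σₓ c x (Σ_y d y k(·, y))(x)`, the value `G c d` depends on `d` only through the
function `d` represents, and by symmetry of `k` the same holds for `c`. Hence `G` pulled back
along any linear section `H₀ → (E →₀ ℝ)` is a well-defined symmetric bilinear form `B`,
positive because `k` is. Taking `c = δₓ` gives the reproducing property, and then
Cauchy–Schwarz, `f(x)² = B(k(·, x), f)² ≤ B(k(·, x), k(·, x)) B(f, f)`, shows that
`B f f = 0` forces `f = 0`. -/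

/-- The function `k(·, x) : E → ℝ` associated to a kernel `k` and a point `x`. -/
noncomputable def kernelSection {E : Type*} (k : E → E → ℝ) (x : E) : E → ℝ :=
  fun y => k y x

open Finsupp

section KernelGram

variable {E : Type*} (k : E → E → ℝ)

def IsPosSemidefKernel : Prop :=
  ∀ (n : ℕ) (x : Fin n → E) (c : Fin n → ℝ), 0 ≤ ∑ i, ∑ j, c i * c j * k (x i) (x j)

noncomputable def kernelCombination : (E →₀ ℝ) →ₗ[ℝ] E → ℝ :=
  linearCombination ℝ (kernelSection k)

noncomputable def kernelGram : LinearMap.BilinForm ℝ (E →₀ ℝ) :=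
  linearCombination ℝ fun x => linearCombination ℝ (k x)

@[simp]
lemma kernelCombination_single (x : E) (a : ℝ) :
    kernelCombination k (single x a) = a • kernelSection k x := by
  simp [kernelCombination]

@[simp]
lemma kernelGram_single_single (x y : E) (a b : ℝ) :
    kernelGram k (single x a) (single y b) = a * b * k x y := by
  simp only [kernelGram, linearCombination_single, LinearMap.smul_apply, smul_eq_mul]
  ring

lemma kernelGram_eq_linearCombination (c d : E →₀ ℝ) :
    kernelGram k c d = linearCombination ℝ (kernelCombination k d) c := by
  induction c using Finsupp.induction_linear with
  | zero => simp
  | add c c' hc hc' => simp [hc, hc']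
  | single x a =>
    induction d using Finsupp.induction_linear with
    | zero => simp
    | add d d' hd hd' => simp [hd, hd', mul_add]
    | single y b => simp [kernelSection]; ring

lemma kernelGram_isSymm (hsymm : ∀ x y, k x y = k y x) : LinearMap.IsSymm (kernelGram k) := by
  rw [LinearMap.isSymm_iff_eq_flip]
  ext x y
  simp [kernelGram, hsymm x y]

lemma sum_sum_mul_mul_nonneg (hpsd : IsPosSemidefKernel k) (s : Finset E) (c : E → ℝ) :
    0 ≤ ∑ x ∈ s, ∑ y ∈ s, c x * c y * k x y := by
  have reindex (F : E → ℝ) : ∑ x ∈ s, F x = ∑ i, F (s.equivFin.symm i) := by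
    rw [← Finset.sum_coe_sort s F]
    exact (Equiv.sum_comp s.equivFin.symm _).symm
  simpa only [reindex] using hpsd _ (fun i => s.equivFin.symm i) (fun i => c (s.equivFin.symm i))

lemma kernelGram_self_nonneg (hpsd : IsPosSemidefKernel k) (c : E →₀ ℝ) :
    0 ≤ kernelGram k c c := by
  convert sum_sum_mul_mul_nonneg k hpsd c.support c using 1
  simp [kernelGram, linearCombination_apply, Finsupp.sum, Finset.mul_sum, mul_assoc]

abbrev kernelSpan : Submodule ℝ (E → ℝ) :=
  Submodule.span ℝ (Set.range (kernelSection k))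

lemma range_kernelCombination : LinearMap.range (kernelCombination k) = kernelSpan k :=
  range_linearCombination ℝ

lemma exists_linear_rightInverse_kernelCombination :
    ∃ s : kernelSpan k →ₗ[ℝ] E →₀ ℝ, ∀ f, kernelCombination k (s f) = f := by
  have hmem (c : E →₀ ℝ) : kernelCombination k c ∈ kernelSpan k :=
    range_kernelCombination k ▸ LinearMap.mem_range_self _ c
  have hsurj : LinearMap.range ((kernelCombination k).codRestrict _ hmem) = ⊤ := by
    rw [LinearMap.range_codRestrict, range_kernelCombination, Submodule.comap_subtype_self]
  obtain ⟨s, hs⟩ := LinearMap.exists_rightInverse_of_surjective _ hsurj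
  exact ⟨s, fun f => congrArg Subtype.val (LinearMap.congr_fun hs f)⟩

lemma kernelGram_congr (hsymm : ∀ x y, k x y = k y x) {c c' d d' : E →₀ ℝ}
    (hc : kernelCombination k c = kernelCombination k c')
    (hd : kernelCombination k d = kernelCombination k d') :
    kernelGram k c d = kernelGram k c' d' := by
  have hsymm' := kernelGram_isSymm k hsymm
  calc kernelGram k c d = kernelGram k c d' := by
        rw [kernelGram_eq_linearCombination, hd, ← kernelGram_eq_linearCombination]
    _ = kernelGram k d' c := hsymm'.eq c d'
    _ = kernelGram k d' c' := by
        rw [kernelGram_eq_linearCombination, hc, ← kernelGram_eq_linearCombination]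
    _ = kernelGram k c' d' := (hsymm'.eq c' d').symm

section kernelForm

variable {k} (s : kernelSpan k →ₗ[ℝ] E →₀ ℝ)

noncomputable def kernelForm : LinearMap.BilinForm ℝ (kernelSpan k) :=
  (kernelGram k).compl₁₂ s s

lemma kernelForm_eq_kernelGram (hsymm : ∀ x y, k x y = k y x)
    (hs : ∀ f, kernelCombination k (s f) = f) {f g : kernelSpan k}
    {c d : E →₀ ℝ} (hc : kernelCombination k c = f) (hd : kernelCombination k d = g) :
    kernelForm s f g = kernelGram k c d :=
  kernelGram_congr k hsymm (by rw [hs, hc]) (by rw [hs, hd])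

lemma kernelForm_isSymm (hsymm : ∀ x y, k x y = k y x) : LinearMap.IsSymm (kernelForm s) :=
  ⟨fun f g => (kernelGram_isSymm k hsymm).eq (s f) (s g)⟩

lemma kernelForm_self_nonneg (hpsd : IsPosSemidefKernel k) (f : kernelSpan k) :
    0 ≤ kernelForm s f f :=
  kernelGram_self_nonneg k hpsd (s f)

lemma kernelForm_apply_eq_sum_sum (hsymm : ∀ x y, k x y = k y x)
    (hs : ∀ f, kernelCombination k (s f) = f) {f g : kernelSpan k} {N M : ℕ}
    {a : Fin N → ℝ} {x : Fin N → E} {b : Fin M → ℝ} {y : Fin M → E}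
    (hf : (f : E → ℝ) = ∑ i, a i • kernelSection k (x i))
    (hg : (g : E → ℝ) = ∑ j, b j • kernelSection k (y j)) :
    kernelForm s f g = ∑ i, ∑ j, a i * b j * k (x i) (y j) := by
  rw [kernelForm_eq_kernelGram s hsymm hs (c := ∑ i, single (x i) (a i))
    (d := ∑ j, single (y j) (b j)) (by simp [hf]) (by simp [hg])]
  simp only [map_sum, LinearMap.sum_apply, kernelGram_single_single]
  exact Finset.sum_comm

lemma kernelForm_kernelSection_apply (hsymm : ∀ x y, k x y = k y x)
    (hs : ∀ f, kernelCombination k (s f) = f) (x : E) (f : kernelSpan k) :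
    kernelForm s ⟨kernelSection k x, Submodule.subset_span ⟨x, rfl⟩⟩ f =
      (f : E → ℝ) x := by
  rw [kernelForm_eq_kernelGram s hsymm hs (c := single x 1) (by simp) (hs f),
    kernelGram_eq_linearCombination, hs f]
  simp

lemma eq_zero_of_kernelForm_self_eq_zero (hsymm : ∀ x y, k x y = k y x)
    (hpsd : IsPosSemidefKernel k) (hs : ∀ f, kernelCombination k (s f) = f) {f : kernelSpan k}
    (hf : kernelForm s f f = 0) :
    f = 0 := by
  have hker : kernelForm s f = 0 := LinearMap.mem_ker.1 <|
    (LinearMap.BilinForm.apply_apply_same_eq_zero_iff _ (kernelForm_self_nonneg s hpsd)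
      (kernelForm_isSymm s hsymm)).1 hf
  ext x
  rw [← kernelForm_kernelSection_apply s hsymm hs, ← (kernelForm_isSymm s hsymm).eq, hker]
  rfl

end kernelForm

end KernelGram

/-- (Core of the Moore–Aronszajn construction.)  Let `k` be a
symmetric positive semidefinite kernel on a set `E`.  On the vector space `H₀`
of finite linear combinations `Σᵢ aᵢ k(·, xᵢ)` (the span of the kernel
sections), there is a bilinear form `B` which is well defined (it depends only
on the functions, not on the chosen representations) with
`B (Σᵢ aᵢ k(·, xᵢ)) (Σⱼ bⱼ k(·, yⱼ)) = Σᵢ Σⱼ aᵢ bⱼ k(xᵢ, yⱼ)`, is symmetric,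
positive (`B f f ≥ 0`), satisfies the reproducing property
`f(x) = B (k(·, x)) f`, and is definite (`B f f = 0` only for `f = 0`); hence
it is an inner product on `H₀`. -/
theorem moore_aronszajn_core
    {E : Type*} (k : E → E → ℝ)
    (hsymm : ∀ x y, k x y = k y x)
    (hpsd : ∀ (n : ℕ) (x : Fin n → E) (c : Fin n → ℝ),
      0 ≤ ∑ i, ∑ j, c i * c j * k (x i) (x j)) :
    ∃ B : (Submodule.span ℝ (Set.range (kernelSection k))) →ₗ[ℝ]
          (Submodule.span ℝ (Set.range (kernelSection k))) →ₗ[ℝ] ℝ,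
      (∀ (f g : Submodule.span ℝ (Set.range (kernelSection k)))
         (N M : ℕ) (a : Fin N → ℝ) (x : Fin N → E) (b : Fin M → ℝ) (y : Fin M → E),
         (f : E → ℝ) = ∑ i, a i • kernelSection k (x i) →
         (g : E → ℝ) = ∑ j, b j • kernelSection k (y j) →
         B f g = ∑ i, ∑ j, a i * b j * k (x i) (y j)) ∧
      (∀ f g, B f g = B g f) ∧
      (∀ f, 0 ≤ B f f) ∧
      (∀ (f : Submodule.span ℝ (Set.range (kernelSection k))) (x : E),
         (f : E → ℝ) x = B ⟨kernelSection k x, Submodule.subset_span ⟨x, rfl⟩⟩ f) ∧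
      (∀ f, B f f = 0 → f = 0) := by
  obtain ⟨s, hs⟩ := exists_linear_rightInverse_kernelCombination k
  exact ⟨kernelForm s,
    fun _ _ _ _ _ _ _ _ hf hg => kernelForm_apply_eq_sum_sum s hsymm hs hf hg,
    fun f g => (kernelForm_isSymm s hsymm).eq f g,
    kernelForm_self_nonneg s hpsd,
    fun f x => (kernelForm_kernelSection_apply s hsymm hs x f).symm,
    fun _ => eq_zero_of_kernelForm_self_eq_zero s hsymm hpsd hs⟩
end

section
/- (Strict positive definiteness of the Gaussian kernel.) Fix σ > 0 and let k(x, y) = exp(−‖x − y‖²/(2σ²)) for x, y ∈ ℝ². Then for any N ≥ 1, any pairwise distinct points x_1, ..., x_N ∈ ℝ², and any c = (c_1, ..., c_N) ∈ ℝ^N with c ≠ 0, one has Σ_{i=1}^N Σ_{j=1}^N c_i c_j k(x_i, x_j) > 0; equivalently, the N × N Gram matrix (k(x_i, x_j))_{i,j} is positive definite. -/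
/-!
Writing `‖x - y‖² = ‖x‖² - 2⟪x, y⟫ + ‖y‖²`, the Gaussian Gram matrix is `D E D` with `D` a
positive diagonal matrix and `E i j = exp (s ⟪x i, x j⟫)`, `s = σ⁻²`. Expanding the exponential,
`cᵀ E c = ∑ₙ sⁿ / n! · cᵀ P⁽ⁿ⁾ c`, where `P⁽ⁿ⁾ i j = ⟪x i, x j⟫ ⁿ` is a Hadamard power of the Gram
matrix of the points, hence positive semidefinite by the Schur product theorem. If every term
vanished, adjoin an arbitrary point `z` with coefficient `0`: the quadratic form of the enlarged
positive semidefinite matrix still vanishes, so the matrix kills the vector, and its `z`-row reads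
`∑ᵢ cᵢ ⟪z, x i⟫ ⁿ = 0`. Choosing `z` so that the `⟪z, x i⟫` are distinct, the Vandermonde
determinant forces `c = 0`.
-/

open Matrix
open scoped Nat RealInnerProductSpace

variable {ι E : Type*} [Fintype ι] [NormedAddCommGroup E] [InnerProductSpace ℝ E]

theorem dotProduct_of_mulVec_self (f : ι → ι → ℝ) (c : ι → ℝ) :
    c ⬝ᵥ of f *ᵥ c = ∑ i, ∑ j, c i * c j * f i j := by
  simp only [dotProduct, mulVec, of_apply, Finset.mul_sum]
  exact Finset.sum_congr rfl fun i _ => Finset.sum_congr rfl fun j _ => by ring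

theorem posSemidef_inner_pow (x : ι → E) (n : ℕ) :
    (of fun i j => ⟪x i, x j⟫ ^ n).PosSemidef := by
  induction n with
  | zero => simpa [vecMulVec] using posSemidef_vecMulVec_self_star (fun _ : ι => (1 : ℝ))
  | succ n ih =>
    have hsucc : (of fun i j => ⟪x i, x j⟫ ^ (n + 1)) =
        (of fun i j => ⟪x i, x j⟫ ^ n) ⊙ gram ℝ x := by
      ext i j
      simp [pow_succ, hadamard_apply, gram_apply]
    exact hsucc ▸ ih.hadamard (posSemidef_gram ℝ x)

theorem sum_mul_inner_pow_eq_zero_of_dotProduct_mulVec_eq_zero {x : ι → E} {b : ι → ℝ} {n : ℕ}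
    (hb : b ⬝ᵥ (of fun i j => ⟪x i, x j⟫ ^ n) *ᵥ b = 0) (z : E) :
    ∑ i, b i * ⟪z, x i⟫ ^ n = 0 := by
  let x' : Option ι → E := fun o => o.elim z x
  let b' : Option ι → ℝ := fun o => o.elim 0 b
  have hb' : (of fun i j => ⟪x' i, x' j⟫ ^ n) *ᵥ b' = 0 := by
    rw [← (posSemidef_inner_pow x' n).dotProduct_mulVec_zero_iff]
    simpa [dotProduct, mulVec, Fintype.sum_option, x', b'] using hb
  simpa [mulVec, dotProduct, Fintype.sum_option, x', b', mul_comm] using congrFun hb' none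

theorem exists_injective_inner {x : ι → E} (hx : Function.Injective x) :
    ∃ z : E, Function.Injective fun i => ⟪z, x i⟫ := by
  obtain ⟨z, hz⟩ := Module.Dual.exists_forall_ne_zero_of_forall_exists
    (fun p : {p : ι × ι // p.1 ≠ p.2} => innerₛₗ ℝ (x p.1.1 - x p.1.2)) fun p =>
      ⟨x p.1.1 - x p.1.2, by
        rw [innerₛₗ_apply_apply]
        exact inner_self_ne_zero.mpr (sub_ne_zero.mpr (hx.ne p.2))⟩
  refine ⟨z, fun i j hij => by_contra fun hne => hz ⟨(i, j), hne⟩ ?_⟩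
  rw [innerₛₗ_apply_apply, real_inner_comm, inner_sub_right]
  exact sub_eq_zero.mpr hij

theorem eq_zero_of_forall_sum_mul_inner_pow_eq_zero {x : ι → E} (hx : Function.Injective x)
    {b : ι → ℝ} (hb : ∀ z n, ∑ i, b i * ⟪z, x i⟫ ^ n = 0) : b = 0 := by
  obtain ⟨z, hz⟩ := exists_injective_inner hx
  let e := Fintype.equivFin ι
  have hbe : b ∘ e.symm = 0 :=
    eq_zero_of_forall_pow_sum_mul_pow_eq_zero (hz.comp e.symm.injective) fun k => by
      rw [← hb z k]
      exact e.symm.sum_comp fun i => b i * ⟪z, x i⟫ ^ (k : ℕ)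
  ext i
  simpa using congrFun hbe (e i)

theorem hasSum_dotProduct_exp_mul_inner_mulVec (s : ℝ) (x : ι → E) (b : ι → ℝ) :
    HasSum (fun n : ℕ => s ^ n / n ! * (b ⬝ᵥ (of fun i j => ⟪x i, x j⟫ ^ n) *ᵥ b))
      (b ⬝ᵥ (of fun i j => Real.exp (s * ⟪x i, x j⟫)) *ᵥ b) := by
  simp only [dotProduct_of_mulVec_self, Finset.mul_sum]
  refine hasSum_sum fun i _ => hasSum_sum fun j _ => ?_
  have hexp := (NormedSpace.expSeries_div_hasSum_exp (s * ⟪x i, x j⟫)).mul_left (b i * b j)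
  rw [← Real.exp_eq_exp_ℝ] at hexp
  exact hexp.congr_fun fun n => by rw [mul_pow]; ring

theorem posDef_exp_mul_inner {s : ℝ} (hs : 0 < s) {x : ι → E} (hx : Function.Injective x) :
    (of fun i j => Real.exp (s * ⟪x i, x j⟫)).PosDef := by
  refine .of_dotProduct_mulVec_pos ?_ fun b hb => ?_
  · ext i j
    simp [real_inner_comm]
  rw [star_trivial]
  have hnonneg (n : ℕ) : 0 ≤ b ⬝ᵥ (of fun i j => ⟪x i, x j⟫ ^ n) *ᵥ b := by
    simpa using (posSemidef_inner_pow x n).dotProduct_mulVec_nonneg b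
  obtain ⟨n, hn⟩ : ∃ n : ℕ, b ⬝ᵥ (of fun i j => ⟪x i, x j⟫ ^ n) *ᵥ b ≠ 0 := by
    by_contra! h
    exact hb (eq_zero_of_forall_sum_mul_inner_pow_eq_zero hx fun z n =>
      sum_mul_inner_pow_eq_zero_of_dotProduct_mulVec_eq_zero (h n) z)
  have hsum := hasSum_dotProduct_exp_mul_inner_mulVec s x b
  rw [← hsum.tsum_eq]
  exact hsum.summable.tsum_pos (fun m => by have := hnonneg m; positivity) n
    (mul_pos (by positivity) ((hnonneg n).lt_of_ne' hn))

theorem posDef_exp_neg_norm_sub_sq_div {σ : ℝ} (hσ : σ ≠ 0) {x : ι → E}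
    (hx : Function.Injective x) :
    (of fun i j => Real.exp (-‖x i - x j‖ ^ 2 / (2 * σ ^ 2))).PosDef := by
  classical
  let d : ι → ℝ := fun i => Real.exp (-‖x i‖ ^ 2 / (2 * σ ^ 2))
  have hd : Function.Injective (diagonal d).mulVec :=
    mulVec_injective_iff_isUnit.mpr <| isUnit_diagonal.mpr <|
      Pi.isUnit_iff.mpr fun i => (Real.exp_pos _).ne'.isUnit
  convert (posDef_exp_mul_inner (s := (σ ^ 2)⁻¹) (by positivity) hx).conjTranspose_mul_mul_same
    hd using 1
  ext i j
  simp only [of_apply, diagonal_conjTranspose, star_trivial, diagonal_mul, mul_diagonal, d,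
    ← Real.exp_add, norm_sub_sq_real]
  congr 1
  field_simp
  ring

theorem gaussian_kernel_strictly_positive_definite_general
    (σ : ℝ) (hσ : 0 < σ)
    (k : EuclideanSpace ℝ (Fin 2) → EuclideanSpace ℝ (Fin 2) → ℝ)
    (hk : ∀ x y, k x y = Real.exp (-‖x - y‖ ^ 2 / (2 * σ ^ 2)))
    (N : ℕ) (x : Fin N → EuclideanSpace ℝ (Fin 2))
    (hx : Function.Injective x) :
    (∀ c : Fin N → ℝ, c ≠ 0 → 0 < ∑ i, ∑ j, c i * c j * k (x i) (x j)) ∧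
      (Matrix.of fun i j => k (x i) (x j)).PosDef := by
  have hpos : (Matrix.of fun i j => k (x i) (x j)).PosDef := by
    simpa only [hk] using posDef_exp_neg_norm_sub_sq_div hσ.ne' hx
  refine ⟨fun c hc => ?_, hpos⟩
  simpa [dotProduct_of_mulVec_self] using hpos.dotProduct_mulVec_pos hc

/-- (Strict positive definiteness of the Gaussian kernel.)
Fix `σ > 0` and let `k(x, y) = exp(−‖x − y‖²/(2σ²))` for `x, y ∈ ℝ²`.  Then for
any `N ≥ 1`, any pairwise distinct points `x₁, …, x_N ∈ ℝ²`, and any nonzero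
`c ∈ ℝ^N`, one has `Σᵢ Σⱼ cᵢ cⱼ k(xᵢ, xⱼ) > 0`; equivalently, the `N × N` Gram
matrix `(k(xᵢ, xⱼ))` is positive definite. -/
theorem gaussian_kernel_strictly_positive_definite
    (σ : ℝ) (hσ : 0 < σ)
    (k : EuclideanSpace ℝ (Fin 2) → EuclideanSpace ℝ (Fin 2) → ℝ)
    (hk : ∀ x y, k x y = Real.exp (-‖x - y‖ ^ 2 / (2 * σ ^ 2)))
    (N : ℕ) (hN : 1 ≤ N) (x : Fin N → EuclideanSpace ℝ (Fin 2))
    (hx : Function.Injective x) :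
    (∀ c : Fin N → ℝ, c ≠ 0 → 0 < ∑ i, ∑ j, c i * c j * k (x i) (x j)) ∧
      (Matrix.of fun i j => k (x i) (x j)).PosDef :=
  gaussian_kernel_strictly_positive_definite_general σ hσ k hk N x hx
end

section
/- Fix σ > 0 and let k(x, y) = exp(−‖x − y‖²/(2σ²)) for x, y ∈ ℝ². If {x_1, ..., x_N} and {y_1, ..., y_M} are two distinct finite sets of points of ℝ² (each with pairwise distinct elements), then the functions I_μ = Σ_{i=1}^N k(·, x_i) and I_ν = Σ_{j=1}^M k(·, y_j) from ℝ² to ℝ are different; that is, the embedding of counting measures μ = Σ_i δ_{x_i} into functions via μ ↦ Σ_i k(·, x_i) is injective. -/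
open scoped RealInnerProductSpace

noncomputable def gaussChar (σ : ℝ) (a : EuclideanSpace ℝ (Fin 2)) :
    Multiplicative (EuclideanSpace ℝ (Fin 2)) →* ℝ where
  toFun z := Real.exp (⟪Multiplicative.toAdd z, a⟫ / σ ^ 2)
  map_one' := by simp
  map_mul' z w := by
    simp [← Real.exp_add, inner_add_left, add_div]

lemma gaussChar_inj (σ : ℝ) (hσ : 0 < σ) : Function.Injective (gaussChar σ) := by
  intro a b h
  have h1 := congrArg (fun f => f (Multiplicative.ofAdd (a - b))) h
  simp only [gaussChar, MonoidHom.coe_mk, OneHom.coe_mk, toAdd_ofAdd] at h1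
  have hσ2 : (σ : ℝ) ^ 2 ≠ 0 := pow_ne_zero 2 hσ.ne'
  have h2 : ⟪a - b, a⟫ = ⟪a - b, b⟫ := by
    have h4 := Real.exp_eq_exp.mp h1
    have h5 := congrArg (· * σ ^ 2) h4
    simpa [div_mul_cancel₀, hσ2] using h5
  have h3 : ⟪a - b, a - b⟫ = 0 := by rw [inner_sub_right, h2, sub_self]
  have := inner_self_eq_zero.mp h3
  exact sub_eq_zero.mp this


lemma gaussChar_linearIndependent (σ : ℝ) (hσ : 0 < σ)
    (T : Finset (EuclideanSpace ℝ (Fin 2))) :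
    LinearIndependent ℝ ((fun f : Multiplicative (EuclideanSpace ℝ (Fin 2)) →* ℝ => ⇑f) ∘
      (fun a : {a // a ∈ T} => gaussChar σ a.1)) := by
  have hinj : Function.Injective (fun a : {a // a ∈ T} => gaussChar σ a.1) :=
    fun a b hab => Subtype.ext (gaussChar_inj σ hσ hab)
  exact LinearIndependent.comp (linearIndependent_monoidHom _ _) _ hinj

set_option maxHeartbeats 2000000 in
/-- Fix `σ > 0` and let `k(x, y) = exp(−‖x − y‖²/(2σ²))` for
`x, y ∈ ℝ²`.  If `{x₁, …, x_N}` and `{y₁, …, y_M}` are two distinct finite sets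
of points of `ℝ²` (each with pairwise distinct elements), then the functions
`I_μ = Σᵢ k(·, xᵢ)` and `I_ν = Σⱼ k(·, yⱼ)` are different; that is, the
embedding of counting measures `μ = Σᵢ δ_{xᵢ}` into functions via
`μ ↦ Σᵢ k(·, xᵢ)` is injective. -/
theorem gaussian_kernel_embedding_of_counting_measures_injective
    (σ : ℝ) (hσ : 0 < σ)
    (k : EuclideanSpace ℝ (Fin 2) → EuclideanSpace ℝ (Fin 2) → ℝ)
    (hk : ∀ x y, k x y = Real.exp (-‖x - y‖ ^ 2 / (2 * σ ^ 2)))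
    (N M : ℕ)
    (x : Fin N → EuclideanSpace ℝ (Fin 2)) (hx : Function.Injective x)
    (y : Fin M → EuclideanSpace ℝ (Fin 2)) (hy : Function.Injective y)
    (hxy : Set.range x ≠ Set.range y) :
    (fun z => ∑ i, k z (x i)) ≠ (fun z => ∑ j, k z (y j)) := by
  intro h
  classical
  set c : EuclideanSpace ℝ (Fin 2) → ℝ := fun a => Real.exp (-‖a‖ ^ 2 / (2 * σ ^ 2)) with hc
  set A : Finset (EuclideanSpace ℝ (Fin 2)) := Finset.image x Finset.univ with hA
  set B : Finset (EuclideanSpace ℝ (Fin 2)) := Finset.image y Finset.univ with hB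
  set T : Finset (EuclideanSpace ℝ (Fin 2)) := A ∪ B with hT
  have hσ2 : (σ : ℝ) ^ 2 ≠ 0 := pow_ne_zero 2 hσ.ne'
  have hAT : A ⊆ T := Finset.subset_union_left
  have hBT : B ⊆ T := Finset.subset_union_right
  -- key pointwise identity
  have key : ∀ z : EuclideanSpace ℝ (Fin 2),
      ∑ a ∈ T, ((if a ∈ A then c a else 0) - (if a ∈ B then c a else 0)) *
        Real.exp (⟪z, a⟫ / σ ^ 2) = 0 := by
    intro z
    have hz := congrFun h z
    have expand : ∀ a : EuclideanSpace ℝ (Fin 2), k z a =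
        Real.exp (-‖z‖ ^ 2 / (2 * σ ^ 2)) * (c a * Real.exp (⟪z, a⟫ / σ ^ 2)) := by
      intro a
      rw [hk, ← Real.exp_add, ← Real.exp_add]
      congr 1
      rw [norm_sub_sq_real]
      field_simp
      ring
    simp only [expand, ← Finset.mul_sum] at hz
    have hz' : ∑ i, c (x i) * Real.exp (⟪z, x i⟫ / σ ^ 2)
        = ∑ j, c (y j) * Real.exp (⟪z, y j⟫ / σ ^ 2) :=
      mul_left_cancel₀ (Real.exp_ne_zero _) hz
    have sumA : ∑ a ∈ T, (if a ∈ A then c a * Real.exp (⟪z, a⟫ / σ ^ 2) else 0)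
        = ∑ i, c (x i) * Real.exp (⟪z, x i⟫ / σ ^ 2) := by
      rw [Finset.sum_ite_mem, Finset.inter_eq_right.mpr hAT, hA,
        Finset.sum_image (fun i _ j _ hij => hx hij)]
    have sumB : ∑ a ∈ T, (if a ∈ B then c a * Real.exp (⟪z, a⟫ / σ ^ 2) else 0)
        = ∑ j, c (y j) * Real.exp (⟪z, y j⟫ / σ ^ 2) := by
      rw [Finset.sum_ite_mem, Finset.inter_eq_right.mpr hBT, hB,
        Finset.sum_image (fun i _ j _ hij => hy hij)]
    have : ∑ a ∈ T, ((if a ∈ A then c a * Real.exp (⟪z, a⟫ / σ ^ 2) else 0)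
        - (if a ∈ B then c a * Real.exp (⟪z, a⟫ / σ ^ 2) else 0)) = 0 := by
      rw [Finset.sum_sub_distrib, sumA, sumB, hz', sub_self]
    refine Eq.trans (Finset.sum_congr rfl fun a _ => ?_) this
    by_cases h1 : a ∈ A <;> by_cases h2 : a ∈ B <;> simp [h1, h2, sub_mul]
  -- linear independence of characters
  have li : LinearIndependent ℝ
      ((fun f : Multiplicative (EuclideanSpace ℝ (Fin 2)) →* ℝ => ⇑f) ∘
        (fun a : {a // a ∈ T} => gaussChar σ a.1)) :=
    gaussChar_linearIndependent σ hσ T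
  set g : {a // a ∈ T} → ℝ :=
    fun a => (if a.1 ∈ A then c a.1 else 0) - (if a.1 ∈ B then c a.1 else 0) with hg
  have hsum : ∑ a : {a // a ∈ T}, g a •
      ((fun f : Multiplicative (EuclideanSpace ℝ (Fin 2)) →* ℝ => ⇑f) ∘
        (fun a : {a // a ∈ T} => gaussChar σ a.1)) a = 0 := by
    funext z
    rw [Finset.sum_apply]
    have : ∀ a : {a // a ∈ T}, (g a • ((fun f : Multiplicative (EuclideanSpace ℝ (Fin 2)) →* ℝ => ⇑f) ∘
        (fun a : {a // a ∈ T} => gaussChar σ a.1)) a) z = g a * Real.exp (⟪Multiplicative.toAdd z, a.1⟫ / σ ^ 2) := by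
      intro a; rfl
    simp only [this]
    have := key (Multiplicative.toAdd z)
    rw [← Finset.sum_coe_sort T
      (fun a => ((if a ∈ A then c a else 0) - (if a ∈ B then c a else 0)) *
        Real.exp (⟪Multiplicative.toAdd z, a⟫ / σ ^ 2))] at this
    exact this
  have hzero := Fintype.linearIndependent_iff.mp li g hsum
  -- find an element in the symmetric difference
  have hAB : A ≠ B := by
    intro hEq
    apply hxy
    have h5 := congrArg (fun s : Finset (EuclideanSpace ℝ (Fin 2)) =>
      (s : Set (EuclideanSpace ℝ (Fin 2)))) hEq
    simpa [hA, hB] using h5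
  have : ∃ a, ¬ (a ∈ A ↔ a ∈ B) := by
    by_contra hcon
    push_neg at hcon
    exact hAB (Finset.ext fun a => hcon a)
  obtain ⟨a, ha⟩ := this
  by_cases h1 : a ∈ A
  · have h2 : a ∉ B := fun hb => ha ⟨fun _ => hb, fun _ => h1⟩
    have hmem : a ∈ T := hAT h1
    have h6 := hzero ⟨a, hmem⟩
    simp only [hg, h1, h2, if_pos, if_neg, ite_true, ite_false] at h6
    exact Real.exp_ne_zero _ (by linarith [h6])
  · have h2 : a ∈ B := by
      by_contra hb
      exact ha ⟨fun hh => absurd hh h1, fun hh => absurd hh hb⟩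
    have hmem : a ∈ T := hBT h2
    have h6 := hzero ⟨a, hmem⟩
    simp only [hg, h1, h2, if_pos, if_neg, ite_true, ite_false] at h6
    exact Real.exp_ne_zero _ (by linarith [h6])
end
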